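/- arXiv:1401.7293 — 2 statements merged into one kernel-verified Lean document; each statement's English description precedes it below -/
import Mathlib

section
/- For the polar 'minus' transform of two binary-input channels P and Q, the symmetric capacity satisfies I((P,Q)^-) ≤ min{I(P), I(Q)}, and for the 'plus' transform, I((P,Q)^+) ≥ max{I(P), I(Q)}. -/
open scoped Classical
noncomputable section

/-- Symmetric capacity: the mutual information between a uniform binary input and the
output of the channel `P`. -/
def symCap {Y : Type*} [Fintype Y] (P : Bool → Y → ℝ) : ℝ :=
  ∑ x : Bool, ∑ y : Y, (1/2) * P x y *
    Real.logb 2 (P x y / ((1/2) * P false y + (1/2) * P true y))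

/-- The polar `minus` transform: `(P,Q)⁻(y₁,y₂ | u₁) = ∑_{u₂} ½ P(y₁|u₁⊕u₂) Q(y₂|u₂)`. -/
def minusCh {Y₁ Y₂ : Type*} (P : Bool → Y₁ → ℝ) (Q : Bool → Y₂ → ℝ) :
    Bool → Y₁ × Y₂ → ℝ :=
  fun u₁ yz => ∑ u₂ : Bool, (1/2) * (P (xor u₁ u₂) yz.1 * Q u₂ yz.2)

/-- The polar `plus` transform: `(P,Q)⁺(y₁,y₂,u₁ | u₂) = ½ P(y₁|u₁⊕u₂) Q(y₂|u₂)`. -/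
def plusCh {Y₁ Y₂ : Type*} (P : Bool → Y₁ → ℝ) (Q : Bool → Y₂ → ℝ) :
    Bool → Y₁ × Y₂ × Bool → ℝ :=
  fun u₂ z => (1/2) * (P (xor z.2.2 u₂) z.1 * Q u₂ z.2.1)

open Finset

lemma one_sub_inv_le_log {x : ℝ} (hx : 0 < x) : 1 - 1/x ≤ Real.log x := by
  have h := Real.log_le_sub_one_of_pos (show (0:ℝ) < 1/x by positivity)
  rw [one_div, Real.log_inv] at h
  rw [one_div]
  linarith

lemma log_sum_ineq {ι : Type*} (s : Finset ι) (a b : ι → ℝ)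
    (ha : ∀ i ∈ s, 0 ≤ a i) (hb : ∀ i ∈ s, 0 ≤ b i)
    (hab : ∀ i ∈ s, b i = 0 → a i = 0) :
    (∑ i ∈ s, a i) * Real.logb 2 ((∑ i ∈ s, a i) / (∑ i ∈ s, b i)) ≤
      ∑ i ∈ s, a i * Real.logb 2 (a i / b i) := by
  classical
  set A := ∑ i ∈ s, a i with hA
  set B := ∑ i ∈ s, b i with hB
  by_cases hA0 : A = 0
  · have hz : ∀ i ∈ s, a i = 0 := (Finset.sum_eq_zero_iff_of_nonneg ha).mp
      (by rw [← hA]; exact hA0)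
    rw [hA0, zero_mul]
    apply Finset.sum_nonneg
    intro i hi
    rw [hz i hi]
    simp
  · have hApos : 0 < A := lt_of_le_of_ne (Finset.sum_nonneg ha) (Ne.symm hA0)
    have hBpos : 0 < B := by
      rcases lt_or_eq_of_le (Finset.sum_nonneg hb) with h | h
      · exact h
      · exfalso
        have hz : ∀ i ∈ s, b i = 0 := (Finset.sum_eq_zero_iff_of_nonneg hb).mp h.symm
        exact hA0 (Finset.sum_eq_zero fun i hi => hab i hi (hz i hi))
    set t := s.filter (fun i => a i ≠ 0) with ht
    have hts : t ⊆ s := Finset.filter_subset _ _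
    have hat : ∀ i ∈ t, 0 < a i := by
      intro i hi
      rw [ht, Finset.mem_filter] at hi
      exact lt_of_le_of_ne (ha i hi.1) (Ne.symm hi.2)
    have hbt : ∀ i ∈ t, 0 < b i := by
      intro i hi
      have hi' := hts hi
      rcases eq_or_lt_of_le (hb i hi') with h | h
      · exact absurd (hab i hi' h.symm) ((Finset.mem_filter.mp hi).2)
      · exact h
    have hAt : A = ∑ i ∈ t, a i := by
      rw [hA, ht, Finset.sum_filter_of_ne (fun i _ h => h)]
    have hRHS : ∑ i ∈ s, a i * Real.logb 2 (a i / b i) =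
        ∑ i ∈ t, a i * Real.logb 2 (a i / b i) := by
      rw [ht, Finset.sum_filter_of_ne]
      intro i _ h hc
      exact h (by rw [hc, zero_mul])
    have hBt : ∑ i ∈ t, b i ≤ B := Finset.sum_le_sum_of_subset_of_nonneg hts
      (fun i hi _ => hb i hi)
    have hL : (0:ℝ) < Real.log 2 := Real.log_pos (by norm_num)
    have key : ∀ i ∈ t, a i * Real.logb 2 (A/B) + (a i - b i * (A/B)) / Real.log 2 ≤
        a i * Real.logb 2 (a i / b i) := by
      intro i hi
      have hai := hat i hi
      have hbi := hbt i hi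
      have hx : (0:ℝ) < (a i / b i) / (A / B) := by positivity
      have hlog := one_sub_inv_le_log hx
      have hsplit : Real.log ((a i / b i) / (A / B)) =
          Real.log (a i / b i) - Real.log (A / B) :=
        Real.log_div (by positivity) (by positivity)
      have hinv : 1 / ((a i / b i) / (A / B)) = (b i * (A/B)) / a i := by
        field_simp
      rw [hsplit, hinv] at hlog
      -- hlog : 1 - b i * (A/B) / a i ≤ log(a/b) - log(A/B)
      have h2 : a i - b i * (A/B) ≤ a i * (Real.log (a i / b i) - Real.log (A / B)) := by
        have := mul_le_mul_of_nonneg_left hlog (le_of_lt hai)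
        calc a i - b i * (A/B) = a i * (1 - b i * (A/B) / a i) := by field_simp
          _ ≤ _ := this
      rw [Real.logb, Real.logb, ← sub_nonneg]
      have heq : a i * (Real.log (a i / b i) / Real.log 2) -
          (a i * (Real.log (A / B) / Real.log 2) + (a i - b i * (A / B)) / Real.log 2) =
          (a i * (Real.log (a i / b i) - Real.log (A/B)) - (a i - b i * (A/B))) / Real.log 2 := by
        field_simp
        ring
      rw [heq]
      exact div_nonneg (by linarith) (le_of_lt hL)
    have hsum := Finset.sum_le_sum key
    rw [← hRHS] at hsum
    have hexp : ∑ i ∈ t, (a i * Real.logb 2 (A/B) + (a i - b i * (A/B)) / Real.log 2) =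
        A * Real.logb 2 (A/B) + (A - (∑ i ∈ t, b i) * (A/B)) / Real.log 2 := by
      rw [Finset.sum_add_distrib, ← Finset.sum_mul, ← hAt]
      congr 1
      rw [← Finset.sum_div, Finset.sum_sub_distrib, ← Finset.sum_mul, ← hAt]
    rw [hexp] at hsum
    have hcorr : 0 ≤ (A - (∑ i ∈ t, b i) * (A/B)) / Real.log 2 := by
      apply div_nonneg _ (le_of_lt hL)
      have : (∑ i ∈ t, b i) * (A/B) ≤ B * (A/B) :=
        mul_le_mul_of_nonneg_right hBt (by positivity)
      rw [mul_div_cancel₀] at this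
      · linarith
      · exact ne_of_gt hBpos
    linarith

def push {Z Z' : Type*} [Fintype Z] (f : Z → Z') (W : Bool → Z → ℝ) :
    Bool → Z' → ℝ :=
  fun x z' => ∑ z : Z, if f z = z' then W x z else 0

lemma symCap_push_le {Z Z' : Type*} [Fintype Z] [Fintype Z'] (f : Z → Z')
    (W : Bool → Z → ℝ) (hW : ∀ x z, 0 ≤ W x z) :
    symCap (push f W) ≤ symCap W := by
  unfold symCap
  apply Finset.sum_le_sum
  intro x _
  -- rewrite RHS as sum over fibers
  rw [← Finset.sum_fiberwise_of_maps_to (t := (univ : Finset Z'))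
      (fun z _ => Finset.mem_univ (f z))
      (fun z => (1/2) * W x z *
        Real.logb 2 (W x z / ((1/2) * W false z + (1/2) * W true z)))]
  apply Finset.sum_le_sum
  intro z' _
  have hpush : ∀ u, push f W u z' = ∑ z ∈ univ.filter (fun z => f z = z'), W u z := by
    intro u
    rw [Finset.sum_filter]
    rfl
  set s := univ.filter (fun z => f z = z') with hs
  have key := log_sum_ineq s (fun z => (1/2) * W x z)
      (fun z => (1/2) * ((1/2) * W false z + (1/2) * W true z))
      (fun z _ => by have := hW x z; positivity)
      (fun z _ => by have := hW false z; have := hW true z; positivity)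
      (fun z _ h => by
        have h0 := hW false z; have h1 := hW true z
        have : W false z = 0 ∧ W true z = 0 := by constructor <;> nlinarith
        cases x <;> simp [this.1, this.2])
  have e1 : ∑ z ∈ s, (1/2) * W x z = (1/2) * push f W x z' := by
    rw [hpush, Finset.mul_sum]
  have e2 : ∑ z ∈ s, (1/2) * ((1/2) * W false z + (1/2) * W true z) =
      (1/2) * ((1/2) * push f W false z' + (1/2) * push f W true z') := by
    rw [hpush, hpush]
    simp only [Finset.mul_sum, ← Finset.sum_add_distrib]
  rw [e1, e2] at key
  have e3 : (1/2) * push f W x z' / ((1/2) * ((1/2) * push f W false z' + (1/2) * push f W true z'))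
      = push f W x z' / ((1/2) * push f W false z' + (1/2) * push f W true z') :=
    mul_div_mul_left _ _ (by norm_num)
  rw [e3] at key
  refine le_trans key (le_of_eq (Finset.sum_congr rfl fun z _ => ?_))
  have h2 : (1/2 : ℝ) ≠ 0 := by norm_num
  simp only [mul_div_mul_left _ _ h2]

lemma aux_ratio (p q m : ℝ) :
    (1/2) * ((1/2) * (p * q)) * Real.logb 2 (((1/2) * (p * q)) / ((1/2) * q * m)) =
      (1/2) * q * ((1/2) * p * Real.logb 2 (p / m)) := by
  rcases eq_or_ne q 0 with h | h
  · simp [h]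
  · have e : ((1/2) * (p * q)) / ((1/2) * q * m) = p / m := by
      rw [show (1/2 : ℝ) * (p * q) = p * ((1/2) * q) by ring,
          show (1/2 : ℝ) * q * m = m * ((1/2) * q) by ring,
          mul_div_mul_right _ _ (mul_ne_zero (by norm_num) h)]
    rw [e]; ring

lemma sum_xor (h : Bool → ℝ) :
    ∑ u : Bool, ∑ c : Bool, (1/2) * h (xor u c) = ∑ x : Bool, h x := by
  simp [Fintype.sum_bool]
  ring

lemma symCap_E1 {Y₁ Y₂ : Type*} [Fintype Y₁] [Fintype Y₂]
    (P : Bool → Y₁ → ℝ) (Q : Bool → Y₂ → ℝ) (hQ1 : ∀ x, ∑ y, Q x y = 1) :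
    symCap (fun (u₁ : Bool) (z : Y₁ × Y₂ × Bool) =>
        (1/2) * (P (xor u₁ z.2.2) z.1 * Q z.2.2 z.2.1)) = symCap P := by
  unfold symCap
  simp only [Fintype.sum_prod_type]
  have step : ∀ (u₁ : Bool) (y₁ : Y₁) (y₂ : Y₂) (c : Bool),
      (1/2) * ((1/2) * (P (xor u₁ c) y₁ * Q c y₂)) *
        Real.logb 2 (((1/2) * (P (xor u₁ c) y₁ * Q c y₂)) /
          ((1/2) * ((1/2) * (P (xor false c) y₁ * Q c y₂)) +
           (1/2) * ((1/2) * (P (xor true c) y₁ * Q c y₂)))) =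
      (1/2) * Q c y₂ * ((1/2) * P (xor u₁ c) y₁ *
        Real.logb 2 (P (xor u₁ c) y₁ / ((1/2) * P false y₁ + (1/2) * P true y₁))) := by
    intro u₁ y₁ y₂ c
    have hd : (1/2) * ((1/2) * (P (xor false c) y₁ * Q c y₂)) +
        (1/2) * ((1/2) * (P (xor true c) y₁ * Q c y₂)) =
        (1/2) * Q c y₂ * ((1/2) * P false y₁ + (1/2) * P true y₁) := by
      cases c <;> simp <;> ring
    rw [hd]
    exact aux_ratio _ _ _
  calc ∑ u₁ : Bool, ∑ y₁ : Y₁, ∑ y₂ : Y₂, ∑ c : Bool,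
        (1/2) * ((1/2) * (P (xor u₁ c) y₁ * Q c y₂)) *
          Real.logb 2 (((1/2) * (P (xor u₁ c) y₁ * Q c y₂)) /
            ((1/2) * ((1/2) * (P (xor false c) y₁ * Q c y₂)) +
             (1/2) * ((1/2) * (P (xor true c) y₁ * Q c y₂))))
      = ∑ u₁ : Bool, ∑ y₁ : Y₁, ∑ c : Bool, (1/2) * ((1/2) * P (xor u₁ c) y₁ *
          Real.logb 2 (P (xor u₁ c) y₁ / ((1/2) * P false y₁ + (1/2) * P true y₁))) := by
        refine Finset.sum_congr rfl fun u₁ _ => Finset.sum_congr rfl fun y₁ _ => ?_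
        rw [Finset.sum_comm]
        refine Finset.sum_congr rfl fun c _ => ?_
        have : ∑ y₂ : Y₂, (1/2) * ((1/2) * (P (xor u₁ c) y₁ * Q c y₂)) *
            Real.logb 2 (((1/2) * (P (xor u₁ c) y₁ * Q c y₂)) /
              ((1/2) * ((1/2) * (P (xor false c) y₁ * Q c y₂)) +
               (1/2) * ((1/2) * (P (xor true c) y₁ * Q c y₂)))) =
            ∑ y₂ : Y₂, Q c y₂ * ((1/2) * ((1/2) * P (xor u₁ c) y₁ *
              Real.logb 2 (P (xor u₁ c) y₁ / ((1/2) * P false y₁ + (1/2) * P true y₁)))) := by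
          refine Finset.sum_congr rfl fun y₂ _ => ?_
          rw [step u₁ y₁ y₂ c]
          ring
        rw [this, ← Finset.sum_mul, hQ1, one_mul]
    _ = ∑ x : Bool, ∑ y₁ : Y₁, (1/2) * P x y₁ *
          Real.logb 2 (P x y₁ / ((1/2) * P false y₁ + (1/2) * P true y₁)) := by
        have h1 : ∀ u₁ : Bool, (∑ y₁ : Y₁, ∑ c : Bool, (1/2) * ((1/2) * P (xor u₁ c) y₁ *
            Real.logb 2 (P (xor u₁ c) y₁ / ((1/2) * P false y₁ + (1/2) * P true y₁)))) =
            ∑ c : Bool, (1/2) * ∑ y₁ : Y₁, (1/2) * P (xor u₁ c) y₁ *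
            Real.logb 2 (P (xor u₁ c) y₁ / ((1/2) * P false y₁ + (1/2) * P true y₁)) := by
          intro u₁
          rw [Finset.sum_comm]
          exact Finset.sum_congr rfl fun c _ => (Finset.mul_sum _ _ _).symm
        rw [Finset.sum_congr rfl fun u₁ _ => h1 u₁]
        exact sum_xor (fun x => ∑ y₁ : Y₁, (1/2) * P x y₁ *
          Real.logb 2 (P x y₁ / ((1/2) * P false y₁ + (1/2) * P true y₁)))

lemma aux_ratio2 (p q m : ℝ) :
    (1/2) * ((1/2) * (q * p)) * Real.logb 2 (((1/2) * (q * p)) / ((1/2) * q * m)) =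
      (1/2) * q * ((1/2) * p * Real.logb 2 (p / m)) := by
  rw [mul_comm q p]; exact aux_ratio p q m

lemma symCap_E2 {Y₁ Y₂ : Type*} [Fintype Y₁] [Fintype Y₂]
    (P : Bool → Y₁ → ℝ) (Q : Bool → Y₂ → ℝ) (hP1 : ∀ x, ∑ y, P x y = 1) :
    symCap (fun (u₁ : Bool) (z : Y₁ × Y₂ × Bool) =>
        (1/2) * (P z.2.2 z.1 * Q (xor u₁ z.2.2) z.2.1)) = symCap Q := by
  unfold symCap
  simp only [Fintype.sum_prod_type]
  have step : ∀ (u₁ : Bool) (y₁ : Y₁) (y₂ : Y₂) (c : Bool),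
      (1/2) * ((1/2) * (P c y₁ * Q (xor u₁ c) y₂)) *
        Real.logb 2 (((1/2) * (P c y₁ * Q (xor u₁ c) y₂)) /
          ((1/2) * ((1/2) * (P c y₁ * Q (xor false c) y₂)) +
           (1/2) * ((1/2) * (P c y₁ * Q (xor true c) y₂)))) =
      P c y₁ * ((1/2) * ((1/2) * Q (xor u₁ c) y₂ *
        Real.logb 2 (Q (xor u₁ c) y₂ / ((1/2) * Q false y₂ + (1/2) * Q true y₂)))) := by
    intro u₁ y₁ y₂ c
    have hd : (1/2) * ((1/2) * (P c y₁ * Q (xor false c) y₂)) +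
        (1/2) * ((1/2) * (P c y₁ * Q (xor true c) y₂)) =
        (1/2) * P c y₁ * ((1/2) * Q false y₂ + (1/2) * Q true y₂) := by
      cases c <;> simp <;> ring
    rw [hd, aux_ratio2]
    ring
  calc ∑ u₁ : Bool, ∑ y₁ : Y₁, ∑ y₂ : Y₂, ∑ c : Bool,
        (1/2) * ((1/2) * (P c y₁ * Q (xor u₁ c) y₂)) *
          Real.logb 2 (((1/2) * (P c y₁ * Q (xor u₁ c) y₂)) /
            ((1/2) * ((1/2) * (P c y₁ * Q (xor false c) y₂)) +
             (1/2) * ((1/2) * (P c y₁ * Q (xor true c) y₂))))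
      = ∑ u₁ : Bool, ∑ y₂ : Y₂, ∑ c : Bool, (1/2) * ((1/2) * Q (xor u₁ c) y₂ *
          Real.logb 2 (Q (xor u₁ c) y₂ / ((1/2) * Q false y₂ + (1/2) * Q true y₂))) := by
        refine Finset.sum_congr rfl fun u₁ _ => ?_
        rw [show (∑ y₁ : Y₁, ∑ y₂ : Y₂, ∑ c : Bool,
            (1/2) * ((1/2) * (P c y₁ * Q (xor u₁ c) y₂)) *
              Real.logb 2 (((1/2) * (P c y₁ * Q (xor u₁ c) y₂)) /
                ((1/2) * ((1/2) * (P c y₁ * Q (xor false c) y₂)) +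
                 (1/2) * ((1/2) * (P c y₁ * Q (xor true c) y₂))))) =
            ∑ y₂ : Y₂, ∑ y₁ : Y₁, ∑ c : Bool,
            (1/2) * ((1/2) * (P c y₁ * Q (xor u₁ c) y₂)) *
              Real.logb 2 (((1/2) * (P c y₁ * Q (xor u₁ c) y₂)) /
                ((1/2) * ((1/2) * (P c y₁ * Q (xor false c) y₂)) +
                 (1/2) * ((1/2) * (P c y₁ * Q (xor true c) y₂))))
          from Finset.sum_comm]
        refine Finset.sum_congr rfl fun y₂ _ => ?_
        rw [Finset.sum_comm]
        refine Finset.sum_congr rfl fun c _ => ?_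
        rw [Finset.sum_congr rfl fun y₁ _ => step u₁ y₁ y₂ c, ← Finset.sum_mul,
          hP1, one_mul]
    _ = ∑ x : Bool, ∑ y₂ : Y₂, (1/2) * Q x y₂ *
          Real.logb 2 (Q x y₂ / ((1/2) * Q false y₂ + (1/2) * Q true y₂)) := by
        have h1 : ∀ u₁ : Bool, (∑ y₂ : Y₂, ∑ c : Bool, (1/2) * ((1/2) * Q (xor u₁ c) y₂ *
            Real.logb 2 (Q (xor u₁ c) y₂ / ((1/2) * Q false y₂ + (1/2) * Q true y₂)))) =
            ∑ c : Bool, (1/2) * ∑ y₂ : Y₂, (1/2) * Q (xor u₁ c) y₂ *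
            Real.logb 2 (Q (xor u₁ c) y₂ / ((1/2) * Q false y₂ + (1/2) * Q true y₂)) := by
          intro u₁
          rw [Finset.sum_comm]
          exact Finset.sum_congr rfl fun c _ => (Finset.mul_sum _ _ _).symm
        rw [Finset.sum_congr rfl fun u₁ _ => h1 u₁]
        exact sum_xor (fun x => ∑ y₂ : Y₂, (1/2) * Q x y₂ *
          Real.logb 2 (Q x y₂ / ((1/2) * Q false y₂ + (1/2) * Q true y₂)))

lemma symCap_W4 {Y₁ : Type*} [Fintype Y₁] (P : Bool → Y₁ → ℝ) :
    symCap (fun (u₂ : Bool) (z : Y₁ × Bool) => (1/2) * P (xor z.2 u₂) z.1) = symCap P := by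
  unfold symCap
  simp only [Fintype.sum_prod_type]
  have step : ∀ (u₂ : Bool) (y₁ : Y₁) (u₁ : Bool),
      (1/2) * ((1/2) * P (xor u₁ u₂) y₁) *
        Real.logb 2 (((1/2) * P (xor u₁ u₂) y₁) /
          ((1/2) * ((1/2) * P (xor u₁ false) y₁) + (1/2) * ((1/2) * P (xor u₁ true) y₁))) =
      (1/2) * ((1/2) * P (xor u₂ u₁) y₁ *
        Real.logb 2 (P (xor u₂ u₁) y₁ / ((1/2) * P false y₁ + (1/2) * P true y₁))) := by
    intro u₂ y₁ u₁
    have hd : (1/2) * ((1/2) * P (xor u₁ false) y₁) + (1/2) * ((1/2) * P (xor u₁ true) y₁) =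
        (1/2) * ((1/2) * P false y₁ + (1/2) * P true y₁) := by
      cases u₁ <;> simp <;> ring
    rw [hd, Bool.xor_comm u₁ u₂,
      mul_div_mul_left _ _ (show (1/2 : ℝ) ≠ 0 by norm_num)]
    ring
  calc ∑ u₂ : Bool, ∑ y₁ : Y₁, ∑ u₁ : Bool,
        (1/2) * ((1/2) * P (xor u₁ u₂) y₁) *
          Real.logb 2 (((1/2) * P (xor u₁ u₂) y₁) /
            ((1/2) * ((1/2) * P (xor u₁ false) y₁) + (1/2) * ((1/2) * P (xor u₁ true) y₁)))
      = ∑ u₂ : Bool, ∑ u₁ : Bool, (1/2) * ∑ y₁ : Y₁, (1/2) * P (xor u₂ u₁) y₁ *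
          Real.logb 2 (P (xor u₂ u₁) y₁ / ((1/2) * P false y₁ + (1/2) * P true y₁)) := by
        refine Finset.sum_congr rfl fun u₂ _ => ?_
        rw [Finset.sum_congr rfl fun y₁ _ => Finset.sum_congr rfl fun u₁ _ => step u₂ y₁ u₁,
          Finset.sum_comm]
        exact Finset.sum_congr rfl fun u₁ _ => (Finset.mul_sum _ _ _).symm
    _ = ∑ x : Bool, ∑ y₁ : Y₁, (1/2) * P x y₁ *
          Real.logb 2 (P x y₁ / ((1/2) * P false y₁ + (1/2) * P true y₁)) :=
        sum_xor (fun x => ∑ y₁ : Y₁, (1/2) * P x y₁ *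
          Real.logb 2 (P x y₁ / ((1/2) * P false y₁ + (1/2) * P true y₁)))

/-- `I((P,Q)⁻) ≤ min{I(P), I(Q)}` and `I((P,Q)⁺) ≥ max{I(P), I(Q)}`. -/
theorem stmt0 {Y₁ Y₂ : Type*} [Fintype Y₁] [Fintype Y₂]
    (P : Bool → Y₁ → ℝ) (Q : Bool → Y₂ → ℝ)
    (hP0 : ∀ x y, 0 ≤ P x y) (hP1 : ∀ x, ∑ y, P x y = 1)
    (hQ0 : ∀ x y, 0 ≤ Q x y) (hQ1 : ∀ x, ∑ y, Q x y = 1) :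
    symCap (minusCh P Q) ≤ min (symCap P) (symCap Q) ∧
      max (symCap P) (symCap Q) ≤ symCap (plusCh P Q) := by
  have hplus0 : ∀ (x : Bool) (z : Y₁ × Y₂ × Bool), 0 ≤ plusCh P Q x z := fun x z =>
    mul_nonneg (by norm_num) (mul_nonneg (hP0 _ _) (hQ0 _ _))
  have hE10 : ∀ (x : Bool) (z : Y₁ × Y₂ × Bool),
      0 ≤ (1/2) * (P (xor x z.2.2) z.1 * Q z.2.2 z.2.1) := fun x z =>
    mul_nonneg (by norm_num) (mul_nonneg (hP0 _ _) (hQ0 _ _))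
  have hE20 : ∀ (x : Bool) (z : Y₁ × Y₂ × Bool),
      0 ≤ (1/2) * (P z.2.2 z.1 * Q (xor x z.2.2) z.2.1) := fun x z =>
    mul_nonneg (by norm_num) (mul_nonneg (hP0 _ _) (hQ0 _ _))
  have hpush1 : push (fun z : Y₁ × Y₂ × Bool => (z.1, z.2.1))
      (fun u₁ z => (1/2) * (P (xor u₁ z.2.2) z.1 * Q z.2.2 z.2.1)) = minusCh P Q := by
    funext u₁ yz
    obtain ⟨y₁, y₂⟩ := yz
    simp [push, minusCh, Fintype.sum_prod_type, Prod.mk.injEq, ite_and,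
      Finset.sum_ite_eq, Finset.sum_ite_eq']
  have hpush2 : push (fun z : Y₁ × Y₂ × Bool => (z.1, z.2.1))
      (fun u₁ z => (1/2) * (P z.2.2 z.1 * Q (xor u₁ z.2.2) z.2.1)) = minusCh P Q := by
    funext u₁ yz
    obtain ⟨y₁, y₂⟩ := yz
    simp only [push, minusCh, Fintype.sum_prod_type, Prod.mk.injEq, ite_and,
      Finset.sum_ite_eq, Finset.sum_ite_eq', Finset.mem_univ, if_true]
    cases u₁ <;> simp [Fintype.sum_bool] <;> ring
  have hpush3 : push (fun z : Y₁ × Y₂ × Bool => z.2.1) (plusCh P Q) =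
      fun u₂ y₂ => Q u₂ y₂ := by
    funext u₂ y₂
    simp only [push, plusCh, Fintype.sum_prod_type,
      Finset.sum_ite_irrel, Finset.sum_const_zero, Finset.sum_ite_eq, Finset.sum_ite_eq',
      Finset.mem_univ, if_true]
    simp [Fintype.sum_bool]
    rw [Finset.sum_add_distrib,
      show (∑ x : Y₁, 2⁻¹ * (P (!u₂) x * Q u₂ y₂)) = 2⁻¹ * Q u₂ y₂ * ∑ x, P (!u₂) x by
        rw [Finset.mul_sum]; exact Finset.sum_congr rfl fun _ _ => by ring,
      show (∑ x : Y₁, 2⁻¹ * (P u₂ x * Q u₂ y₂)) = 2⁻¹ * Q u₂ y₂ * ∑ x, P u₂ x by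
        rw [Finset.mul_sum]; exact Finset.sum_congr rfl fun _ _ => by ring,
      hP1, hP1]
    ring
  have hpush4 : push (fun z : Y₁ × Y₂ × Bool => (z.1, z.2.2)) (plusCh P Q) =
      fun (u₂ : Bool) (z : Y₁ × Bool) => (1/2) * P (xor z.2 u₂) z.1 := by
    funext u₂ z
    obtain ⟨y₁, u₁⟩ := z
    simp only [push, plusCh, Fintype.sum_prod_type, Prod.mk.injEq, ite_and,
      Finset.sum_ite_irrel, Finset.sum_const_zero, Finset.sum_ite_eq, Finset.sum_ite_eq',
      Finset.mem_univ, if_true]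
    rw [show (∑ y₂' : Y₂, 1/2 * (P (xor u₁ u₂) y₁ * Q u₂ y₂')) =
        1/2 * P (xor u₁ u₂) y₁ * ∑ y₂', Q u₂ y₂' by
      rw [Finset.mul_sum]; exact Finset.sum_congr rfl fun _ _ => by ring, hQ1, mul_one]
  constructor
  · apply le_min
    · calc symCap (minusCh P Q)
          = symCap (push (fun z : Y₁ × Y₂ × Bool => (z.1, z.2.1))
              (fun u₁ z => (1/2) * (P (xor u₁ z.2.2) z.1 * Q z.2.2 z.2.1))) := by
            rw [hpush1]
        _ ≤ symCap (fun (u₁ : Bool) (z : Y₁ × Y₂ × Bool) =>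
              (1/2) * (P (xor u₁ z.2.2) z.1 * Q z.2.2 z.2.1)) :=
            symCap_push_le _ _ hE10
        _ = symCap P := symCap_E1 P Q hQ1
    · calc symCap (minusCh P Q)
          = symCap (push (fun z : Y₁ × Y₂ × Bool => (z.1, z.2.1))
              (fun u₁ z => (1/2) * (P z.2.2 z.1 * Q (xor u₁ z.2.2) z.2.1))) := by
            rw [hpush2]
        _ ≤ symCap (fun (u₁ : Bool) (z : Y₁ × Y₂ × Bool) =>
              (1/2) * (P z.2.2 z.1 * Q (xor u₁ z.2.2) z.2.1)) :=
            symCap_push_le _ _ hE20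
        _ = symCap Q := symCap_E2 P Q hP1
  · apply max_le
    · calc symCap P
          = symCap (fun (u₂ : Bool) (z : Y₁ × Bool) => (1/2) * P (xor z.2 u₂) z.1) :=
            (symCap_W4 P).symm
        _ = symCap (push (fun z : Y₁ × Y₂ × Bool => (z.1, z.2.2)) (plusCh P Q)) := by
            rw [hpush4]
        _ ≤ symCap (plusCh P Q) := symCap_push_le _ _ hplus0
    · calc symCap Q
          = symCap (push (fun z : Y₁ × Y₂ × Bool => z.2.1) (plusCh P Q)) := by
            rw [hpush3]
        _ ≤ symCap (plusCh P Q) := symCap_push_le _ _ hplus0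
end
end

section
/- Genie-aided MAC bound comparison in strong interference: if I(X; Y, W) ≤ I(X; Z, W) and I(W; Z, X) ≤ I(W; Y, X) for independent X and W, then the pentagon with constraints R₁ ≤ I(X;Y,W), R₂ ≤ I(W;Y,X), R₁+R₂ ≤ I(X,W;Y) intersected with the pentagon R₁ ≤ I(X;Z,W), R₂ ≤ I(W;Z,X), R₁+R₂ ≤ I(X,W;Z) equals the region { (R₁,R₂) : R₁ ≤ I(X;Y,W), R₂ ≤ I(W;Z,X), R₁+R₂ ≤ min(I(X,W;Y), I(X,W;Z)) }. -/
/-- Genie-aided MAC bound comparison in strong interference.  Here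
`aY = I(X;Y,W)`, `aZ = I(X;Z,W)`, `bY = I(W;Y,X)`, `bZ = I(W;Z,X)`, `sY = I(X,W;Y)`,
`sZ = I(X,W;Z)` are the (nonnegative) mutual informations for independent `X` and `W`.
If `I(X;Y,W) ≤ I(X;Z,W)` and `I(W;Z,X) ≤ I(W;Y,X)`, the intersection of the two MAC
pentagons equals `{(R₁,R₂) : R₁ ≤ I(X;Y,W), R₂ ≤ I(W;Z,X), R₁+R₂ ≤ min(I(X,W;Y), I(X,W;Z))}`. -/
theorem stmt19 (aY aZ bY bZ sY sZ : ℝ)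
    (haY : 0 ≤ aY) (haZ : 0 ≤ aZ) (hbY : 0 ≤ bY) (hbZ : 0 ≤ bZ)
    (hsY : 0 ≤ sY) (hsZ : 0 ≤ sZ)
    (hstrong1 : aY ≤ aZ) (hstrong2 : bZ ≤ bY) :
    {r : ℝ × ℝ | r.1 ≤ aY ∧ r.2 ≤ bY ∧ r.1 + r.2 ≤ sY} ∩
        {r : ℝ × ℝ | r.1 ≤ aZ ∧ r.2 ≤ bZ ∧ r.1 + r.2 ≤ sZ}
      = {r : ℝ × ℝ | r.1 ≤ aY ∧ r.2 ≤ bZ ∧ r.1 + r.2 ≤ min sY sZ} := by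
  ext r
  simp only [Set.mem_inter_iff, Set.mem_setOf_eq, le_min_iff]
  constructor
  · rintro ⟨⟨h1, h2, h3⟩, h4, h5, h6⟩
    exact ⟨h1, h5, h3, h6⟩
  · rintro ⟨h1, h2, h3, h4⟩
    exact ⟨⟨h1, h2.trans hstrong2, h3⟩, h1.trans hstrong1, h2, h4⟩
end
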